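/- For every positive integer k, the following identity of formal power series in q holds: ( Σ_{n=0}^{∞} D_k(n) q^n ) · ∏_{i=1}^{α_k} (1 − q^{3i−1}) · ∏_{i ∈ A_k} (1 − q^i) = ∏_{i=α_k+1}^{k} (1 + q^{3i−1}). -/

import Mathlib

open Finset

/-- The plane partition diamond condition of length `k` on `a : Fin (3k+1) → ℕ`,
where `a i` (0-indexed) corresponds to `a_{i+1}` (1-indexed). -/
def IsDiamond (k : ℕ) (a : Fin (3 * k + 1) → ℕ) : Prop :=
  ∀ i : ℕ, ∀ _ : i < k,
    a ⟨3 * i + 1, by omega⟩ ≤ a ⟨3 * i, by omega⟩ ∧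
    a ⟨3 * i + 2, by omega⟩ ≤ a ⟨3 * i, by omega⟩ ∧
    a ⟨3 * i + 3, by omega⟩ ≤ a ⟨3 * i + 1, by omega⟩ ∧
    a ⟨3 * i + 3, by omega⟩ ≤ a ⟨3 * i + 2, by omega⟩

/-- `ppD k n`: the number of plane partition diamonds of length `k` of `n`. -/
noncomputable def ppD (k n : ℕ) : ℕ :=
  Nat.card {a : Fin (3 * k + 1) → ℕ // IsDiamond k a ∧ ∑ i, a i = n}

/-- The restricted partition function `p_a(n)` for a sequence `a = (a_1, …, a_r)`. -/
noncomputable def rp {r : ℕ} (a : Fin r → ℕ) (n : ℕ) : ℕ :=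
  Nat.card {x : Fin r → ℕ // ∑ i, a i * x i = n}

/-- The sequence `a[k]`, 0-indexed: `seqA k i = a[k]_{i+1}`. -/
def seqA (k : ℕ) : Fin (3 * k + 1) → ℕ := fun i =>
  if ((i : ℕ) + 1) % 6 = 4 then ((i : ℕ) + 1) / 2 else (i : ℕ) + 1

/-- `α_k = ⌊(k+1)/2⌋`. -/
def alphaK (k : ℕ) : ℕ := (k + 1) / 2

/-- `m_J = ∑_{i ∈ J} (3i − 1)`. -/
def mJ (J : Finset ℕ) : ℕ := ∑ i ∈ J, (3 * i - 1)

/-- `A_k = {1 ≤ j ≤ 3k+1 : j ≢ 4 (mod 6)}`. -/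
def setA (k : ℕ) : Finset ℕ := (Finset.Icc 1 (3 * k + 1)).filter (fun j => j % 6 ≠ 4)

/-- `D[k] = lcm A_k`. -/
def DK (k : ℕ) : ℕ := (setA k).lcm id

/-- `β_k = 5α_k − 2` if `k` is odd, `β_k = 5α_k + 1` if `k` is even. -/
def betaK (k : ℕ) : ℕ := if k % 2 = 1 then 5 * alphaK k - 2 else 5 * alphaK k + 1

/-- `φ_k(j) = j + ⌈(j−3)/5⌉` (the value is a nonnegative integer for `j ≥ 1`). -/
def phiK (j : ℕ) : ℕ := ((j : ℤ) + ⌈((j : ℚ) - 3) / 5⌉).toNat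

/-- `ψ_k(j) = j − ⌈(j−3)/6⌉` (the value is a nonnegative integer for `j ≥ 1`). -/
def psiK (j : ℕ) : ℕ := ((j : ℤ) - ⌈((j : ℚ) - 3) / 6⌉).toNat

/-- `B'_k = {j ∈ B_k : j ≡ 2 or 4 (mod 5), j ≤ φ_k⁻¹(3α_k − 1)}`. -/
def setB' (k : ℕ) : Finset ℕ :=
  (Finset.Icc 1 (betaK k)).filter
    (fun j => (j % 5 = 2 ∨ j % 5 = 4) ∧ j ≤ psiK (3 * alphaK k - 1))

/-- `ε_k(j) = 2` if `j ∈ B'_k`, else `1`. -/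
def epsK (k j : ℕ) : ℕ := if j ∈ setB' k then 2 else 1

/-- `s_k(t_1, …, t_{β_k}) = ∏_{j ∈ B'_k} (1 + min{t_j, 2(D[k]/φ_k(j) − 1) − t_j})`. -/
def sK (k : ℕ) (t : ℕ → ℕ) : ℕ :=
  ∏ j ∈ setB' k, (1 + min (t j) (2 * (DK k / phiK j - 1) - t j))

/-- Turn a `Fin β`-indexed tuple into a 1-indexed family: `tOf t j = t_j` for `1 ≤ j ≤ β`. -/
def tOf {β : ℕ} (t : Fin β → ℕ) : ℕ → ℕ := fun j =>
  if h : 1 ≤ j ∧ j ≤ β then t ⟨j - 1, by omega⟩ else 0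

/-- Unsigned Stirling numbers of the first kind: `x(x+1)⋯(x+r−1) = ∑_k stirling1 r k * x^k`. -/
def stirling1 : ℕ → ℕ → ℕ
  | 0, 0 => 1
  | 0, _ + 1 => 0
  | _ + 1, 0 => 0
  | n + 1, m + 1 => stirling1 n m + n * stirling1 n (m + 1)

open PowerSeries

/-!
Index a diamond `a` from `0` and call `i < k` an ascent if `a (3i+1) < a (3i+2)`. Exchanging the
two middle entries of every ascent block turns `a` into a sequence `c` that decreases weakly, and
strictly from `3i+1` to `3i+2` at each ascent `i`. Given the set `S` of ascents, removing these
forced drops and taking successive differences identifies `c` with an arbitrary `x` such that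
`∑ j, (j + 1) x j = |a| - ∑_{i ∈ S} (3i + 2)`. Hence
`∑ D_k(n) qⁿ = ∏_{i<k} (1 + q^(3i+2)) / ∏_{j=1}^{3k+1} (1 - qʲ)`. The identity follows by
factoring `1 - q^(6i-2) = (1 - q^(3i-1)) (1 + q^(3i-1))` for the exponents `j ≡ 4 (mod 6)` and
cancelling the unit `∏_{i ≤ α_k} (1 + q^(3i-1))`.
-/

section Cardinality

theorem Nat.card_subtype_and_congr {α β : Type*} {p : α → Prop} {q : β → Prop}
    (e : Subtype p ≃ Subtype q) {P : α → Prop} {Q : β → Prop} (h : ∀ a, P a.1 ↔ Q (e a).1) :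
    Nat.card {a // p a ∧ P a} = Nat.card {b // q b ∧ Q b} :=
  Nat.card_congr <| (Equiv.subtypeSubtypeEquivSubtypeInter p P).symm.trans <|
    (e.subtypeEquiv h).trans (Equiv.subtypeSubtypeEquivSubtypeInter q Q)

theorem Nat.card_subtype_eq_sum_card_fiberwise {α β : Type*} {P : α → Prop} [Finite {a // P a}]
    {f : α → β} {t : Finset β} (hf : ∀ a, P a → f a ∈ t) :
    Nat.card {a // P a} = ∑ b ∈ t, Nat.card {a // P a ∧ f a = b} := by
  let g : {a // P a} → t := fun a => ⟨f a, hf a a.2⟩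
  rw [← Nat.card_congr (Equiv.sigmaFiberEquiv g), Nat.card_sigma,
    ← sum_coe_sort t fun b => Nat.card {a // P a ∧ f a = b}]
  exact sum_congr rfl fun b _ => Nat.card_congr <|
    (Equiv.subtypeEquivRight fun _ => Subtype.ext_iff).trans
      (Equiv.subtypeSubtypeEquivSubtypeInter P fun a => f a = b)

end Cardinality

section RestrictedPartition

variable {r : ℕ} {R : Type*} [CommRing R]

theorem finite_rp (a : Fin r → ℕ) (ha : ∀ i, 0 < a i) (n : ℕ) :
    Finite {x : Fin r → ℕ // ∑ i, a i * x i = n} := by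
  refine Set.Finite.to_subtype ((Set.finite_Iic fun _ => n).subset fun x hx i => ?_)
  calc x i ≤ a i * x i := Nat.le_mul_of_pos_left _ (ha i)
    _ ≤ ∑ j, a j * x j :=
      single_le_sum (f := fun j => a j * x j) (fun _ _ => Nat.zero_le _) (mem_univ i)
    _ = n := hx

theorem rp_fin_zero (a : Fin 0 → ℕ) (n : ℕ) : rp a n = if n = 0 then 1 else 0 := by
  split_ifs with hn
  · subst hn
    rw [rp, Nat.card_eq_one_iff_exists]
    exact ⟨⟨finZeroElim, by simp⟩, fun y => Subtype.ext (funext finZeroElim)⟩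
  · simp [rp, Ne.symm hn]

theorem card_subtype_mul_eq (d c : ℕ) (hd : 0 < d) :
    Nat.card {m : ℕ // d * m = c} = if d ∣ c then 1 else 0 := by
  split_ifs with h
  · obtain ⟨m, rfl⟩ := h
    rw [Nat.card_eq_one_iff_exists]
    exact ⟨⟨m, rfl⟩, fun ⟨m', hm'⟩ => Subtype.ext (Nat.eq_of_mul_eq_mul_left hd hm')⟩
  · simp only [Nat.card_eq_zero, isEmpty_subtype]
    exact Or.inl fun m hm => h ⟨m, hm.symm⟩

def splitFirstEquiv (a : Fin (r + 1) → ℕ) (n : ℕ) :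
    {x : Fin (r + 1) → ℕ // ∑ i, a i * x i = n} ≃
      Σ p : antidiagonal n,
        {m : ℕ // a 0 * m = p.1.1} × {y : Fin r → ℕ // ∑ i, Fin.tail a i * y i = p.1.2} where
  toFun x := ⟨⟨(a 0 * x.1 0, ∑ i, Fin.tail a i * x.1 i.succ), by
    simpa [Fin.sum_univ_succ, Fin.tail] using x.2⟩, ⟨x.1 0, rfl⟩, ⟨Fin.tail x.1, rfl⟩⟩
  invFun q := ⟨Fin.cons q.2.1.1 q.2.2.1, by
    have hy := q.2.2.2
    simp only [Fin.tail] at hy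
    simp only [Fin.sum_univ_succ, Fin.cons_zero, Fin.cons_succ]
    linarith [q.2.1.2, mem_antidiagonal.mp q.1.2]⟩
  left_inv x := by ext i; refine Fin.cases ?_ (fun _ => ?_) i <;> simp [Fin.tail]
  right_inv := by
    rintro ⟨⟨⟨_, _⟩, _⟩, ⟨m, hm⟩, ⟨y, hy⟩⟩
    cases hm
    cases hy
    rfl

theorem rp_succ (a : Fin (r + 1) → ℕ) (ha : ∀ i, 0 < a i) (n : ℕ) :
    rp a n = ∑ p ∈ antidiagonal n, (if a 0 ∣ p.1 then 1 else 0) * rp (Fin.tail a) p.2 := by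
  have := finite_rp (Fin.tail a) fun i => ha i.succ
  have (c : ℕ) : Finite {m : ℕ // a 0 * m = c} :=
    have : Subsingleton {m : ℕ // a 0 * m = c} :=
      ⟨fun x y => Subtype.ext (Nat.eq_of_mul_eq_mul_left (ha 0) (x.2.trans y.2.symm))⟩
    Finite.of_subsingleton
  rw [rp, Nat.card_congr (splitFirstEquiv a n), Nat.card_sigma]
  simp only [Nat.card_prod, card_subtype_mul_eq _ _ (ha 0)]
  exact sum_coe_sort (antidiagonal n) fun p => (if a 0 ∣ p.1 then 1 else 0) * rp (Fin.tail a) p.2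

theorem expand_mk_one_mul_one_sub_X_pow (d : ℕ) (hd : d ≠ 0) :
    expand d hd (mk 1 : R⟦X⟧) * (1 - X ^ d) = 1 := by
  have h : (1 - X ^ d : R⟦X⟧) = expand d hd (1 - X) := by simp
  rw [h, ← map_mul, mk_one_mul_one_sub_eq_one, map_one]

theorem mk_rp_mul_prod_one_sub_X_pow (a : Fin r → ℕ) (ha : ∀ i, 0 < a i) :
    PowerSeries.mk (fun n => (rp a n : R)) * ∏ i, (1 - X ^ a i) = 1 := by
  induction r with
  | zero =>
    ext n
    simp [rp_fin_zero, coeff_one]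
  | succ r ih =>
    have hd : a 0 ≠ 0 := (ha 0).ne'
    have hsplit : PowerSeries.mk (fun n => (rp a n : R)) =
        expand (a 0) hd (mk 1) * PowerSeries.mk (fun n => (rp (Fin.tail a) n : R)) := by
      ext n
      simp [rp_succ a ha, coeff_mul, coeff_expand]
    rw [hsplit, Fin.prod_univ_succ, mul_mul_mul_comm, expand_mk_one_mul_one_sub_X_pow, one_mul]
    exact ih _ fun i => ha i.succ

end RestrictedPartition

section GapChain

variable {r : ℕ}

def VanishesFrom (r : ℕ) (f : ℕ → ℕ) : Prop := ∀ j, r ≤ j → f j = 0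

def tailSum (r : ℕ) (f : ℕ → ℕ) (j : ℕ) : ℕ := ∑ l ∈ Ico j r, f l

def IsGapChain (r : ℕ) (t c : ℕ → ℕ) : Prop :=
  VanishesFrom r c ∧ ∀ j < r, c (j + 1) + t j ≤ c j

def gaps (r : ℕ) (t c : ℕ → ℕ) (j : ℕ) : ℕ := if j < r then c j - c (j + 1) - t j else 0

theorem tailSum_of_lt {f : ℕ → ℕ} {j : ℕ} (h : j < r) :
    tailSum r f j = f j + tailSum r f (j + 1) :=
  sum_eq_sum_Ico_succ_bot h f

theorem tailSum_of_le {f : ℕ → ℕ} {j : ℕ} (h : r ≤ j) : tailSum r f j = 0 := by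
  simp [tailSum, Ico_eq_empty_of_le h]

theorem sum_tailSum (f : ℕ → ℕ) :
    ∑ j ∈ range r, tailSum r f j = ∑ l ∈ range r, (l + 1) * f l := by
  simp only [tailSum, range_eq_Ico, sum_Ico_Ico_comm, sum_const, Nat.card_Ico, smul_eq_mul,
    Nat.sub_zero]

theorem eq_tailSum_of_vanishesFrom {c f : ℕ → ℕ} (hc : VanishesFrom r c)
    (h : ∀ j < r, f j + c (j + 1) = c j) (j : ℕ) : c j = tailSum r f j := by
  induction hm : r - j generalizing j with
  | zero => rw [hc j (by omega), tailSum_of_le (by omega)]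
  | succ m ih => rw [tailSum_of_lt (by omega), ← ih (j + 1) (by omega), h j (by omega)]

theorem isGapChain_tailSum (t x : ℕ → ℕ) : IsGapChain r t (tailSum r (x + t)) := by
  refine ⟨fun j hj => tailSum_of_le hj, fun j hj => ?_⟩
  rw [tailSum_of_lt hj (f := x + t), Pi.add_apply]
  omega

def gapChainEquiv (r : ℕ) (t : ℕ → ℕ) : {x // VanishesFrom r x} ≃ {c // IsGapChain r t c} where
  toFun x := ⟨tailSum r (x.1 + t), isGapChain_tailSum t x⟩
  invFun c := ⟨gaps r t c.1, fun j hj => if_neg (by omega)⟩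
  left_inv x := by
    ext j
    simp only [gaps]
    split_ifs with hj
    · rw [tailSum_of_lt hj, Pi.add_apply]
      omega
    · exact (x.2 j (by omega)).symm
  right_inv c := by
    ext j
    refine (eq_tailSum_of_vanishesFrom c.2.1 (fun j hj => ?_) j).symm
    have := c.2.2 j hj
    simp only [Pi.add_apply, gaps, if_pos hj]
    omega

theorem sum_tailSum_add (x t : ℕ → ℕ) :
    ∑ j ∈ range r, tailSum r (x + t) j =
      ∑ j ∈ range r, (j + 1) * x j + ∑ j ∈ range r, (j + 1) * t j := by
  simp only [sum_tailSum, Pi.add_apply, mul_add, sum_add_distrib]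

theorem card_isGapChain_sum_eq (t : ℕ → ℕ) (n : ℕ) :
    Nat.card {c // IsGapChain r t c ∧ ∑ j ∈ range r, c j = n} =
      Nat.card {x // VanishesFrom r x ∧
        ∑ j ∈ range r, (j + 1) * x j + ∑ j ∈ range r, (j + 1) * t j = n} :=
  (Nat.card_subtype_and_congr (gapChainEquiv r t) fun x => by
    simp [gapChainEquiv, sum_tailSum_add]).symm

end GapChain

section ZeroExtend

variable {r : ℕ}

def zeroExtend (a : Fin r → ℕ) (j : ℕ) : ℕ := if h : j < r then a ⟨j, h⟩ else 0

theorem zeroExtend_of_lt (a : Fin r → ℕ) {j : ℕ} (h : j < r) : zeroExtend a j = a ⟨j, h⟩ :=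
  dif_pos h

@[simp]
theorem zeroExtend_val (a : Fin r → ℕ) (i : Fin r) : zeroExtend a i = a i :=
  zeroExtend_of_lt a i.2

def zeroExtendEquiv (r : ℕ) : (Fin r → ℕ) ≃ {A // VanishesFrom r A} where
  toFun a := ⟨zeroExtend a, fun _ hj => dif_neg (by omega)⟩
  invFun A i := A.1 i
  left_inv a := by ext; simp
  right_inv A := by
    ext j
    change zeroExtend (fun i => A.1 i) j = A.1 j
    by_cases hj : j < r
    · exact zeroExtend_of_lt _ hj
    · exact (dif_neg hj).trans (A.2 j (by omega)).symm

theorem card_subtype_zeroExtend (P : (ℕ → ℕ) → Prop) :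
    Nat.card {a : Fin r → ℕ // P (zeroExtend a)} = Nat.card {A // VanishesFrom r A ∧ P A} :=
  Nat.card_congr <| ((zeroExtendEquiv r).subtypeEquiv fun _ => Iff.rfl).trans
    (Equiv.subtypeSubtypeEquivSubtypeInter _ _)

theorem sum_zeroExtend (g : ℕ → ℕ → ℕ) (a : Fin r → ℕ) :
    ∑ j ∈ range r, g j (zeroExtend a j) = ∑ i : Fin r, g i (a i) := by
  rw [← Fin.sum_univ_eq_sum_range fun j => g j (zeroExtend a j)]
  simp

end ZeroExtend

section DiamondSeq

variable {k : ℕ} {S : Finset ℕ}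

def IsDiamondSeq (k : ℕ) (A : ℕ → ℕ) : Prop :=
  ∀ i < k, A (3 * i + 1) ≤ A (3 * i) ∧ A (3 * i + 2) ≤ A (3 * i) ∧
    A (3 * i + 3) ≤ A (3 * i + 1) ∧ A (3 * i + 3) ≤ A (3 * i + 2)

theorem isDiamond_iff_isDiamondSeq (a : Fin (3 * k + 1) → ℕ) :
    IsDiamond k a ↔ IsDiamondSeq k (zeroExtend a) := by
  refine forall₂_congr fun i hi => ?_
  simp only [zeroExtend_of_lt a (show 3 * i < 3 * k + 1 by omega),
    zeroExtend_of_lt a (show 3 * i + 1 < 3 * k + 1 by omega),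
    zeroExtend_of_lt a (show 3 * i + 2 < 3 * k + 1 by omega),
    zeroExtend_of_lt a (show 3 * i + 3 < 3 * k + 1 by omega)]

def ascents (k : ℕ) (A : ℕ → ℕ) : Finset ℕ :=
  (range k).filter fun i => A (3 * i + 1) < A (3 * i + 2)

theorem ascents_subset (A : ℕ → ℕ) : ascents k A ⊆ range k := filter_subset _ _

theorem ascents_eq_iff (hS : S ⊆ range k) (A : ℕ → ℕ) :
    ascents k A = S ↔ ∀ i < k, (A (3 * i + 1) < A (3 * i + 2) ↔ i ∈ S) := by
  constructor
  · rintro rfl i hi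
    simp [ascents, hi]
  · intro h
    ext i
    by_cases hi : i < k
    · simp [ascents, hi, h i hi]
    · simp only [ascents, mem_filter, mem_range, hi, false_and, false_iff]
      exact fun hiS => hi (mem_range.mp (hS hiS))

def pairSwap (S : Finset ℕ) (j : ℕ) : ℕ :=
  if j % 3 = 1 ∧ j / 3 ∈ S then j + 1 else if j % 3 = 2 ∧ j / 3 ∈ S then j - 1 else j

def ascentGap (S : Finset ℕ) (j : ℕ) : ℕ := if j % 3 = 1 ∧ j / 3 ∈ S then 1 else 0

@[simp] theorem pairSwap_three_mul (i : ℕ) : pairSwap S (3 * i) = 3 * i := by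
  simp [pairSwap]

@[simp] theorem pairSwap_three_mul_add_one (i : ℕ) :
    pairSwap S (3 * i + 1) = if i ∈ S then 3 * i + 2 else 3 * i + 1 := by
  simp [pairSwap, Nat.mul_add_div]

@[simp] theorem pairSwap_three_mul_add_two (i : ℕ) :
    pairSwap S (3 * i + 2) = if i ∈ S then 3 * i + 1 else 3 * i + 2 := by
  simp [pairSwap, Nat.mul_add_div]

theorem pairSwap_three_mul_add_two_add_one (i : ℕ) : pairSwap S (3 * i + 2 + 1) = 3 * i + 3 :=
  pairSwap_three_mul (i + 1)

@[simp] theorem ascentGap_three_mul (i : ℕ) : ascentGap S (3 * i) = 0 := by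
  simp [ascentGap]

@[simp] theorem ascentGap_three_mul_add_one (i : ℕ) :
    ascentGap S (3 * i + 1) = if i ∈ S then 1 else 0 := by
  simp [ascentGap, Nat.mul_add_div]

@[simp] theorem ascentGap_three_mul_add_two (i : ℕ) : ascentGap S (3 * i + 2) = 0 := by
  simp [ascentGap]

theorem exists_eq_three_mul_add (j : ℕ) : ∃ i, j = 3 * i ∨ j = 3 * i + 1 ∨ j = 3 * i + 2 :=
  ⟨j / 3, by omega⟩

theorem pairSwap_involutive (S : Finset ℕ) : Function.Involutive (pairSwap S) := by
  intro j
  obtain ⟨i, rfl | rfl | rfl⟩ := exists_eq_three_mul_add j <;> by_cases hi : i ∈ S <;> simp [hi]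

theorem pairSwap_of_le (hS : S ⊆ range k) {j : ℕ} (hj : 3 * k + 1 ≤ j) : pairSwap S j = j := by
  have : j / 3 ∉ S := fun h => by have := mem_range.mp (hS h); omega
  simp [pairSwap, this]

theorem pairSwap_lt {j : ℕ} (hj : j < 3 * k + 1) : pairSwap S j < 3 * k + 1 := by
  unfold pairSwap
  split_ifs <;> omega

theorem sum_comp_pairSwap (S : Finset ℕ) (A : ℕ → ℕ) :
    ∑ j ∈ range (3 * k + 1), A (pairSwap S j) = ∑ j ∈ range (3 * k + 1), A j :=
  sum_nbij' (pairSwap S) (pairSwap S) (fun _ hj => mem_range.mpr (pairSwap_lt (mem_range.mp hj)))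
    (fun _ hj => mem_range.mpr (pairSwap_lt (mem_range.mp hj)))
    (fun j _ => pairSwap_involutive S j) (fun j _ => pairSwap_involutive S j) fun _ _ => rfl

theorem sum_mul_ascentGap (hS : S ⊆ range k) :
    ∑ j ∈ range (3 * k + 1), (j + 1) * ascentGap S j = ∑ i ∈ S, (3 * i + 2) := by
  have himage : (range (3 * k + 1)).filter (fun j => j % 3 = 1 ∧ j / 3 ∈ S) =
      S.image fun i => 3 * i + 1 := by
    ext j
    simp only [mem_filter, mem_range, mem_image]
    constructor
    · rintro ⟨-, hj, hS'⟩
      exact ⟨j / 3, hS', by omega⟩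
    · rintro ⟨i, hi, rfl⟩
      have := mem_range.mp (hS hi)
      refine ⟨by omega, by omega, ?_⟩
      rwa [show (3 * i + 1) / 3 = i by omega]
  simp only [ascentGap, mul_ite, mul_one, mul_zero, ← sum_filter, himage]
  rw [sum_image fun _ _ _ _ h => by omega]

theorem forall_lt_three_mul_add_one {P : ℕ → Prop} :
    (∀ j < 3 * k + 1, P j) ↔ (∀ i < k, P (3 * i) ∧ P (3 * i + 1) ∧ P (3 * i + 2)) ∧ P (3 * k) := by
  refine ⟨fun h => ⟨fun i hi => ⟨h _ (by omega), h _ (by omega), h _ (by omega)⟩, h _ (by omega)⟩,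
    fun ⟨h, hk⟩ j hj => ?_⟩
  obtain ⟨i, rfl | rfl | rfl⟩ := exists_eq_three_mul_add j
  · rcases Nat.lt_or_ge i k with hi | hi
    · exact (h i hi).1
    · rwa [show i = k by omega]
  · exact (h i (by omega)).2.1
  · exact (h i (by omega)).2.2

theorem isGapChain_comp_pairSwap_iff (hS : S ⊆ range k) (A : ℕ → ℕ) :
    IsGapChain (3 * k + 1) (ascentGap S) (A ∘ pairSwap S) ↔
      VanishesFrom (3 * k + 1) A ∧ IsDiamondSeq k A ∧ ascents k A = S := by
  have hvan : VanishesFrom (3 * k + 1) (A ∘ pairSwap S) ↔ VanishesFrom (3 * k + 1) A :=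
    forall₂_congr fun j hj => by rw [Function.comp_apply, pairSwap_of_le hS hj]
  rw [IsGapChain, hvan, ascents_eq_iff hS, IsDiamondSeq, ← forall₂_and, forall_lt_three_mul_add_one]
  refine and_congr_right fun hA => ?_
  have hlast : A (pairSwap S (3 * k + 1)) + ascentGap S (3 * k) ≤ A (pairSwap S (3 * k)) := by
    have hk : k ∉ S := fun h => by simpa using hS h
    simp [hk, hA _ le_rfl]
  simp only [Function.comp_apply, hlast, and_true]
  refine forall₂_congr fun i hi => ?_
  by_cases hiS : i ∈ S <;>
    simp only [hiS, ↓reduceIte, pairSwap_three_mul, pairSwap_three_mul_add_one,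
      pairSwap_three_mul_add_two, pairSwap_three_mul_add_two_add_one, ascentGap_three_mul,
      ascentGap_three_mul_add_one, ascentGap_three_mul_add_two, add_zero, iff_true, iff_false,
      not_lt] <;>
    omega

end DiamondSeq

section Counting

theorem card_sum_mul_add_eq {r : ℕ} (w : Fin r → ℕ) (m n : ℕ) :
    Nat.card {x : Fin r → ℕ // ∑ i, w i * x i + m = n} = if m ≤ n then rp w (n - m) else 0 := by
  split_ifs with h
  · exact Nat.card_congr (Equiv.subtypeEquivRight fun _ => by omega)
  · rw [Nat.card_eq_zero]
    exact Or.inl ⟨fun x => h (by omega)⟩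

variable {k : ℕ}

theorem finite_isDiamond_sum_eq (n : ℕ) :
    Finite {a : Fin (3 * k + 1) → ℕ // IsDiamond k a ∧ ∑ i, a i = n} :=
  have := finite_rp (fun _ : Fin (3 * k + 1) => 1) (fun _ => one_pos) n
  Finite.of_injective (fun a => (⟨a.1, by simpa using a.2.2⟩ : {x // ∑ i, 1 * x i = n}))
    fun _ _ h => Subtype.ext (by simpa using h)

theorem card_isDiamond_ascents_eq {S : Finset ℕ} (hS : S ⊆ range k) (n : ℕ) :
    Nat.card {a : Fin (3 * k + 1) → ℕ //
        (IsDiamond k a ∧ ∑ i, a i = n) ∧ ascents k (zeroExtend a) = S} =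
      if ∑ i ∈ S, (3 * i + 2) ≤ n then
        rp (fun i : Fin (3 * k + 1) => (i : ℕ) + 1) (n - ∑ i ∈ S, (3 * i + 2))
      else 0 := by
  let swap : Equiv.Perm (ℕ → ℕ) := Function.Involutive.toPerm (fun A => A ∘ pairSwap S)
    fun A => funext fun j => congrArg A (pairSwap_involutive S j)
  calc _ = Nat.card {A // VanishesFrom (3 * k + 1) A ∧
          ((IsDiamondSeq k A ∧ ∑ j ∈ range (3 * k + 1), A j = n) ∧ ascents k A = S)} := by
        simp_rw [isDiamond_iff_isDiamondSeq, ← sum_zeroExtend (fun _ x => x)]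
        exact card_subtype_zeroExtend fun A =>
          (IsDiamondSeq k A ∧ ∑ j ∈ range (3 * k + 1), A j = n) ∧ ascents k A = S
    _ = Nat.card {A // (VanishesFrom (3 * k + 1) A ∧ IsDiamondSeq k A ∧ ascents k A = S) ∧
          ∑ j ∈ range (3 * k + 1), A j = n} :=
        Nat.card_congr (Equiv.subtypeEquivRight fun _ => by tauto)
    _ = Nat.card {c // IsGapChain (3 * k + 1) (ascentGap S) c ∧
          ∑ j ∈ range (3 * k + 1), c j = n} :=
        Nat.card_congr <| swap.subtypeEquiv fun A => by
          change _ ↔ IsGapChain _ _ (A ∘ pairSwap S) ∧ ∑ j ∈ _, A (pairSwap S j) = n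
          rw [isGapChain_comp_pairSwap_iff hS, sum_comp_pairSwap]
    _ = Nat.card {x // VanishesFrom (3 * k + 1) x ∧
          ∑ j ∈ range (3 * k + 1), (j + 1) * x j + ∑ i ∈ S, (3 * i + 2) = n} := by
        rw [card_isGapChain_sum_eq, sum_mul_ascentGap hS]
    _ = _ := by
        simp_rw [← card_sum_mul_add_eq, ← card_subtype_zeroExtend,
          sum_zeroExtend fun j x => (j + 1) * x]

theorem ppD_eq_sum_powerset (k n : ℕ) :
    ppD k n = ∑ S ∈ (range k).powerset,
      if ∑ i ∈ S, (3 * i + 2) ≤ n then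
        rp (fun i : Fin (3 * k + 1) => (i : ℕ) + 1) (n - ∑ i ∈ S, (3 * i + 2))
      else 0 := by
  have := finite_isDiamond_sum_eq (k := k) n
  rw [ppD, Nat.card_subtype_eq_sum_card_fiberwise (f := fun a => ascents k (zeroExtend a))
    fun a _ => mem_powerset.mpr (ascents_subset _)]
  exact sum_congr rfl fun S hS => card_isDiamond_ascents_eq (mem_powerset.mp hS) n

end Counting

section GeneratingFunction

variable {R : Type*} [CommRing R]

theorem prod_Icc_one_eq_prod_range {M : Type*} [CommMonoid M] (f : ℕ → M) (m : ℕ) :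
    ∏ j ∈ Icc 1 m, f j = ∏ i ∈ range m, f (i + 1) := by
  rw [← Ico_add_one_right_eq_Icc, prod_Ico_eq_prod_range, Nat.add_sub_cancel]
  simp only [add_comm 1]

theorem mk_ppD (k : ℕ) :
    PowerSeries.mk (fun n => (ppD k n : R)) = (∏ i ∈ range k, (1 + X ^ (3 * i + 2))) *
      PowerSeries.mk fun n => (rp (fun i : Fin (3 * k + 1) => (i : ℕ) + 1) n : R) := by
  ext n
  rw [prod_one_add, sum_mul, coeff_mk, ppD_eq_sum_powerset, map_sum]
  push_cast
  refine sum_congr rfl fun S _ => ?_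
  rw [prod_pow_eq_pow_sum, coeff_X_pow_mul', coeff_mk]

theorem mk_ppD_mul_prod_one_sub_X_pow (k : ℕ) :
    PowerSeries.mk (fun n => (ppD k n : R)) * ∏ j ∈ Icc 1 (3 * k + 1), (1 - X ^ j) =
      ∏ i ∈ Icc 1 k, (1 + X ^ (3 * i - 1)) := by
  rw [mk_ppD, prod_Icc_one_eq_prod_range, prod_Icc_one_eq_prod_range, mul_assoc,
    ← Fin.prod_univ_eq_prod_range fun i => (1 - X ^ (i + 1) : R⟦X⟧),
    mk_rp_mul_prod_one_sub_X_pow _ fun _ => Nat.succ_pos _, mul_one]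
  simp only [show ∀ i, 3 * (i + 1) - 1 = 3 * i + 2 by omega]

theorem prod_Icc_one_mul_prod_Icc_add_one {M : Type*} [CommMonoid M] (f : ℕ → M) {a b : ℕ}
    (h : a ≤ b) : (∏ i ∈ Icc 1 a, f i) * ∏ i ∈ Icc (a + 1) b, f i = ∏ i ∈ Icc 1 b, f i := by
  have hIcc (c : ℕ) : Icc 1 c = Ioc 0 c := Icc_add_one_left_eq_Ioc 0 c
  rw [hIcc, hIcc, Icc_add_one_left_eq_Ioc]
  exact prod_Ioc_consecutive f (Nat.zero_le a) h

theorem prod_Icc_one_sub_X_pow_eq (k : ℕ) :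
    ∏ j ∈ Icc 1 (3 * k + 1), (1 - X ^ j : R⟦X⟧) =
      (∏ i ∈ Icc 1 (alphaK k), (1 - X ^ (3 * i - 1))) *
        (∏ i ∈ Icc 1 (alphaK k), (1 + X ^ (3 * i - 1))) * ∏ j ∈ setA k, (1 - X ^ j) := by
  have himage : (Icc 1 (3 * k + 1)).filter (· % 6 = 4) = (Icc 1 (alphaK k)).image (6 * · - 2) := by
    ext j
    simp only [mem_filter, mem_Icc, mem_image, alphaK]
    constructor
    · rintro ⟨hj, hj4⟩
      exact ⟨j / 6 + 1, by omega, by omega⟩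
    · rintro ⟨i, hi, rfl⟩
      omega
  rw [← prod_filter_mul_prod_filter_not (Icc 1 (3 * k + 1)) (· % 6 = 4), himage,
    prod_image fun a ha b hb h => by simp only [coe_Icc, Set.mem_Icc] at ha hb; omega,
    ← prod_mul_distrib]
  congr 1
  refine prod_congr rfl fun i hi => ?_
  rw [show 6 * i - 2 = (3 * i - 1) + (3 * i - 1) by simp only [mem_Icc] at hi; omega, pow_add]
  ring

theorem isUnit_prod_one_add_X_pow {ι : Type*} (s : Finset ι) (e : ι → ℕ)
    (he : ∀ i ∈ s, e i ≠ 0) : IsUnit (∏ i ∈ s, (1 + X ^ e i) : R⟦X⟧) := by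
  rw [isUnit_iff_constantCoeff, map_prod, prod_eq_one fun i hi => by simp [zero_pow (he i hi)]]
  exact isUnit_one

end GeneratingFunction

theorem stmt10_general (k : ℕ) :
    (PowerSeries.mk fun n => (ppD k n : ℤ)) *
        (∏ i ∈ Finset.Icc 1 (alphaK k), (1 - (PowerSeries.X : PowerSeries ℤ) ^ (3 * i - 1))) *
        (∏ i ∈ setA k, (1 - (PowerSeries.X : PowerSeries ℤ) ^ i))
      = ∏ i ∈ Finset.Icc (alphaK k + 1) k,
          (1 + (PowerSeries.X : PowerSeries ℤ) ^ (3 * i - 1)) := by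
  have hα : alphaK k ≤ k := by unfold alphaK; omega
  have hunit : IsUnit (∏ i ∈ Icc 1 (alphaK k), (1 + X ^ (3 * i - 1)) : ℤ⟦X⟧) :=
    isUnit_prod_one_add_X_pow _ _ fun i hi => by rw [mem_Icc] at hi; omega
  refine hunit.mul_right_cancel ?_
  calc _ = PowerSeries.mk (fun n => (ppD k n : ℤ)) *
          ((∏ i ∈ Icc 1 (alphaK k), (1 - X ^ (3 * i - 1))) *
            (∏ i ∈ Icc 1 (alphaK k), (1 + X ^ (3 * i - 1))) * ∏ j ∈ setA k, (1 - X ^ j)) := by ring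
    _ = ∏ i ∈ Icc 1 k, (1 + X ^ (3 * i - 1)) := by
      rw [← prod_Icc_one_sub_X_pow_eq, mk_ppD_mul_prod_one_sub_X_pow]
    _ = _ := by rw [← prod_Icc_one_mul_prod_Icc_add_one _ hα, mul_comm]

/-- the reduced generating function identity
`(∑ D_k(n) qⁿ) · ∏_{i=1}^{α_k} (1 − q^{3i−1}) · ∏_{i ∈ A_k} (1 − qⁱ)
  = ∏_{i=α_k+1}^{k} (1 + q^{3i−1})` in `ℤ[[q]]`. -/
theorem stmt10 (k : ℕ) (hk : 1 ≤ k) :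
    (PowerSeries.mk fun n => (ppD k n : ℤ)) *
        (∏ i ∈ Finset.Icc 1 (alphaK k), (1 - (PowerSeries.X : PowerSeries ℤ) ^ (3 * i - 1))) *
        (∏ i ∈ setA k, (1 - (PowerSeries.X : PowerSeries ℤ) ^ i))
      = ∏ i ∈ Finset.Icc (alphaK k + 1) k,
          (1 + (PowerSeries.X : PowerSeries ℤ) ^ (3 * i - 1)) :=
  stmt10_general k
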